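/- arXiv:1108.4982 — 2 statements merged into one kernel-verified Lean document; each statement's English description precedes it below -/
import Mathlib

section
/- Let Φ be a real symmetric positive definite n×n matrix, η a real number, 𝒜 a real n×n matrix, ℬ a real n×m matrix, 𝒞 a real p×n matrix, and 𝒟 a real p×m matrix. Then the symmetric 2×2 block matrix with block rows [𝒜ᵀΦ𝒜 − Φ + 𝒞ᵀ𝒞, 𝒜ᵀΦℬ + 𝒞ᵀ𝒟], [ℬᵀΦ𝒜 + 𝒟ᵀ𝒞, ℬᵀΦℬ + 𝒟ᵀ𝒟 − η·I_m] is negative definite if and only if the symmetric 4×4 block matrix with block rows [−Φ, 0, 𝒜ᵀ, 𝒞ᵀ], [0, −η·I_m, ℬᵀ, 𝒟ᵀ], [𝒜, ℬ, −Φ⁻¹, 0], [𝒞, 𝒟, 0, −I_p] is negative definite. -/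
open Matrix

/-- A real matrix is negative definite if its negation is positive definite. -/
def Matrix.NegDef {n : Type*} [Fintype n] (M : Matrix n n ℝ) : Prop := (-M).PosDef

section Blocks

variable {R i1 i2 i3 i4 i5 i6 j1 j2 j3 j4 j5 j6 : Type*}

/-- Assemble a 3×3 block matrix from its blocks. -/
def blk3 (A11 : Matrix i1 j1 R) (A12 : Matrix i1 j2 R) (A13 : Matrix i1 j3 R)
    (A21 : Matrix i2 j1 R) (A22 : Matrix i2 j2 R) (A23 : Matrix i2 j3 R)
    (A31 : Matrix i3 j1 R) (A32 : Matrix i3 j2 R) (A33 : Matrix i3 j3 R) :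
    Matrix (i1 ⊕ (i2 ⊕ i3)) (j1 ⊕ (j2 ⊕ j3)) R :=
  fromBlocks A11 (fromCols A12 A13) (fromRows A21 A31) (fromBlocks A22 A23 A32 A33)

/-- Assemble a 4×4 block matrix from its blocks. -/
def blk4 (A11 : Matrix i1 j1 R) (A12 : Matrix i1 j2 R) (A13 : Matrix i1 j3 R) (A14 : Matrix i1 j4 R)
    (A21 : Matrix i2 j1 R) (A22 : Matrix i2 j2 R) (A23 : Matrix i2 j3 R) (A24 : Matrix i2 j4 R)
    (A31 : Matrix i3 j1 R) (A32 : Matrix i3 j2 R) (A33 : Matrix i3 j3 R) (A34 : Matrix i3 j4 R)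
    (A41 : Matrix i4 j1 R) (A42 : Matrix i4 j2 R) (A43 : Matrix i4 j3 R) (A44 : Matrix i4 j4 R) :
    Matrix (i1 ⊕ (i2 ⊕ (i3 ⊕ i4))) (j1 ⊕ (j2 ⊕ (j3 ⊕ j4))) R :=
  fromBlocks A11 (fromCols A12 (fromCols A13 A14))
    (fromRows A21 (fromRows A31 A41)) (blk3 A22 A23 A24 A32 A33 A34 A42 A43 A44)

/-- Assemble a 5×5 block matrix from its blocks. -/
def blk5 (A11 : Matrix i1 j1 R) (A12 : Matrix i1 j2 R) (A13 : Matrix i1 j3 R) (A14 : Matrix i1 j4 R)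
    (A15 : Matrix i1 j5 R)
    (A21 : Matrix i2 j1 R) (A22 : Matrix i2 j2 R) (A23 : Matrix i2 j3 R) (A24 : Matrix i2 j4 R)
    (A25 : Matrix i2 j5 R)
    (A31 : Matrix i3 j1 R) (A32 : Matrix i3 j2 R) (A33 : Matrix i3 j3 R) (A34 : Matrix i3 j4 R)
    (A35 : Matrix i3 j5 R)
    (A41 : Matrix i4 j1 R) (A42 : Matrix i4 j2 R) (A43 : Matrix i4 j3 R) (A44 : Matrix i4 j4 R)
    (A45 : Matrix i4 j5 R)
    (A51 : Matrix i5 j1 R) (A52 : Matrix i5 j2 R) (A53 : Matrix i5 j3 R) (A54 : Matrix i5 j4 R)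
    (A55 : Matrix i5 j5 R) :
    Matrix (i1 ⊕ (i2 ⊕ (i3 ⊕ (i4 ⊕ i5)))) (j1 ⊕ (j2 ⊕ (j3 ⊕ (j4 ⊕ j5)))) R :=
  fromBlocks A11 (fromCols A12 (fromCols A13 (fromCols A14 A15)))
    (fromRows A21 (fromRows A31 (fromRows A41 A51)))
    (blk4 A22 A23 A24 A25 A32 A33 A34 A35 A42 A43 A44 A45 A52 A53 A54 A55)

/-- Assemble a 6×6 block matrix from its blocks. -/
def blk6 (A11 : Matrix i1 j1 R) (A12 : Matrix i1 j2 R) (A13 : Matrix i1 j3 R) (A14 : Matrix i1 j4 R)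
    (A15 : Matrix i1 j5 R) (A16 : Matrix i1 j6 R)
    (A21 : Matrix i2 j1 R) (A22 : Matrix i2 j2 R) (A23 : Matrix i2 j3 R) (A24 : Matrix i2 j4 R)
    (A25 : Matrix i2 j5 R) (A26 : Matrix i2 j6 R)
    (A31 : Matrix i3 j1 R) (A32 : Matrix i3 j2 R) (A33 : Matrix i3 j3 R) (A34 : Matrix i3 j4 R)
    (A35 : Matrix i3 j5 R) (A36 : Matrix i3 j6 R)
    (A41 : Matrix i4 j1 R) (A42 : Matrix i4 j2 R) (A43 : Matrix i4 j3 R) (A44 : Matrix i4 j4 R)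
    (A45 : Matrix i4 j5 R) (A46 : Matrix i4 j6 R)
    (A51 : Matrix i5 j1 R) (A52 : Matrix i5 j2 R) (A53 : Matrix i5 j3 R) (A54 : Matrix i5 j4 R)
    (A55 : Matrix i5 j5 R) (A56 : Matrix i5 j6 R)
    (A61 : Matrix i6 j1 R) (A62 : Matrix i6 j2 R) (A63 : Matrix i6 j3 R) (A64 : Matrix i6 j4 R)
    (A65 : Matrix i6 j5 R) (A66 : Matrix i6 j6 R) :
    Matrix (i1 ⊕ (i2 ⊕ (i3 ⊕ (i4 ⊕ (i5 ⊕ i6))))) (j1 ⊕ (j2 ⊕ (j3 ⊕ (j4 ⊕ (j5 ⊕ j6))))) R :=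
  fromBlocks A11 (fromCols A12 (fromCols A13 (fromCols A14 (fromCols A15 A16))))
    (fromRows A21 (fromRows A31 (fromRows A41 (fromRows A51 A61))))
    (blk5 A22 A23 A24 A25 A26 A32 A33 A34 A35 A36 A42 A43 A44 A45 A46
      A52 A53 A54 A55 A56 A62 A63 A64 A65 A66)

end Blocks

/-!
Write the negated 4×4 matrix, after regrouping its index blocks as `(n ⊕ m) ⊕ (n ⊕ p)`, as
`[[X, Gᴴ], [G, P⁻¹]]` with `X = diag(Φ, η I)`, `P = diag(Φ, I)` and `G = -[[A, B], [C, D]]`.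
Since `P⁻¹` is positive definite, the Schur complement criterion makes this matrix positive
definite iff `X - Gᴴ P G` is, and `X - Gᴴ P G` is exactly the negated 2×2 matrix.
-/

namespace Matrix

theorem posDef_submatrix_equiv {m n R : Type*} [Ring R] [PartialOrder R] [StarRing R]
    {M : Matrix n n R} (e : m ≃ n) : (M.submatrix e e).PosDef ↔ M.PosDef :=
  ⟨fun h => by simpa using h.submatrix e.symm.injective, fun h => h.submatrix e.injective⟩

theorem negDef_submatrix_equiv {m n : Type*} [Fintype m] [Fintype n] {M : Matrix n n ℝ}
    (e : m ≃ n) : (M.submatrix e e).NegDef ↔ M.NegDef :=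
  posDef_submatrix_equiv (M := -M) e

section SchurComplement

open scoped ComplexOrder

variable {m n 𝕜 : Type*} [Fintype m] [Fintype n] [DecidableEq m] [DecidableEq n] [RCLike 𝕜]

/- The semidefinite Schur complement criterion of Mathlib, upgraded through
`det (fromBlocks A B Bᴴ D) = det D * det (A - B * D⁻¹ * Bᴴ)`: a positive semidefinite matrix is
positive definite iff it is invertible. -/
theorem PosDef.fromBlocks₂₂_posDef_iff (A : Matrix m m 𝕜) (B : Matrix m n 𝕜) {D : Matrix n n 𝕜}
    (hD : D.PosDef) : (fromBlocks A B Bᴴ D).PosDef ↔ (A - B * D⁻¹ * Bᴴ).PosDef := by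
  have := hD.isUnit.invertible
  have hdet : (fromBlocks A B Bᴴ D).det = D.det * (A - B * D⁻¹ * Bᴴ).det := by
    rw [det_fromBlocks₂₂, invOf_eq_nonsing_inv]
  constructor
  · intro h
    rw [((PosDef.fromBlocks₂₂ A B hD).mp h.posSemidef).posDef_iff_isUnit, isUnit_iff_isUnit_det]
    exact (IsUnit.mul_iff.mp (hdet ▸ (isUnit_iff_isUnit_det _).mp h.isUnit)).2
  · intro h
    rw [((PosDef.fromBlocks₂₂ A B hD).mpr h.posSemidef).posDef_iff_isUnit, isUnit_iff_isUnit_det,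
      hdet]
    exact ((isUnit_iff_isUnit_det D).mp hD.isUnit).mul ((isUnit_iff_isUnit_det _).mp h.isUnit)

theorem PosDef.fromBlocks_zero {A : Matrix m m 𝕜} {D : Matrix n n 𝕜} (hA : A.PosDef)
    (hD : D.PosDef) : (fromBlocks A 0 0 D).PosDef := by
  simpa using (PosDef.fromBlocks₂₂_posDef_iff A 0 hD).mpr (by simpa using hA)

theorem PosDef.fromBlocks_inv₂₂_posDef_iff (X : Matrix m m 𝕜) (B : Matrix n m 𝕜)
    {P : Matrix n n 𝕜} (hP : P.PosDef) :
    (fromBlocks X Bᴴ B P⁻¹).PosDef ↔ (X - Bᴴ * P * B).PosDef := by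
  have := PosDef.fromBlocks₂₂_posDef_iff X Bᴴ hP.inv
  rwa [conjTranspose_conjTranspose,
    nonsing_inv_nonsing_inv P ((isUnit_iff_isUnit_det P).mp hP.isUnit)] at this

end SchurComplement

end Matrix

theorem blk4_eq_submatrix_fromBlocks {R i1 i2 i3 i4 j1 j2 j3 j4 : Type*}
    (A11 : Matrix i1 j1 R) (A12 : Matrix i1 j2 R) (A13 : Matrix i1 j3 R) (A14 : Matrix i1 j4 R)
    (A21 : Matrix i2 j1 R) (A22 : Matrix i2 j2 R) (A23 : Matrix i2 j3 R) (A24 : Matrix i2 j4 R)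
    (A31 : Matrix i3 j1 R) (A32 : Matrix i3 j2 R) (A33 : Matrix i3 j3 R) (A34 : Matrix i3 j4 R)
    (A41 : Matrix i4 j1 R) (A42 : Matrix i4 j2 R) (A43 : Matrix i4 j3 R) (A44 : Matrix i4 j4 R) :
    blk4 A11 A12 A13 A14 A21 A22 A23 A24 A31 A32 A33 A34 A41 A42 A43 A44 =
      (fromBlocks (fromBlocks A11 A12 A21 A22) (fromBlocks A13 A14 A23 A24)
        (fromBlocks A31 A32 A41 A42) (fromBlocks A33 A34 A43 A44)).submatrix
        (Equiv.sumAssoc i1 i2 (i3 ⊕ i4)).symm (Equiv.sumAssoc j1 j2 (j3 ⊕ j4)).symm := by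
  ext (i | i | i | i) (j | j | j | j) <;> rfl

theorem lmi_2x2_iff_4x4_general
    (n m p : ℕ) (Φ : Matrix (Fin n) (Fin n) ℝ) (hΦ : Φ.PosDef) (η : ℝ)
    (A : Matrix (Fin n) (Fin n) ℝ) (B : Matrix (Fin n) (Fin m) ℝ)
    (C : Matrix (Fin p) (Fin n) ℝ) (D : Matrix (Fin p) (Fin m) ℝ) :
    (fromBlocks (Aᵀ * Φ * A - Φ + Cᵀ * C) (Aᵀ * Φ * B + Cᵀ * D)
        (Bᵀ * Φ * A + Dᵀ * C) (Bᵀ * Φ * B + Dᵀ * D - η • 1)).NegDef ↔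
      (blk4 (-Φ) 0 Aᵀ Cᵀ
            0 ((-η) • 1 : Matrix (Fin m) (Fin m) ℝ) Bᵀ Dᵀ
            A B (-Φ⁻¹) 0
            C D 0 (-1)).NegDef := by
  let X : Matrix (Fin n ⊕ Fin m) (Fin n ⊕ Fin m) ℝ := fromBlocks Φ 0 0 (η • 1)
  let P : Matrix (Fin n ⊕ Fin p) (Fin n ⊕ Fin p) ℝ := fromBlocks Φ 0 0 1
  let G : Matrix (Fin n ⊕ Fin p) (Fin n ⊕ Fin m) ℝ := -fromBlocks A B C D
  have hP : P.PosDef := hΦ.fromBlocks_zero PosDef.one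
  have hPinv : P⁻¹ = fromBlocks Φ⁻¹ 0 0 1 := by
    simpa using inv_fromBlocks_zero₂₁_of_isUnit_iff Φ (0 : Matrix (Fin n) (Fin p) ℝ) 1
      ⟨fun _ => isUnit_one, fun _ => hΦ.isUnit⟩
  have hschur : X - Gᴴ * P * G = -fromBlocks (Aᵀ * Φ * A - Φ + Cᵀ * C) (Aᵀ * Φ * B + Cᵀ * D)
      (Bᵀ * Φ * A + Dᵀ * C) (Bᵀ * Φ * B + Dᵀ * D - η • 1) := by
    simp only [X, G, P, conjTranspose_eq_transpose_of_trivial, fromBlocks_transpose,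
      fromBlocks_neg, fromBlocks_multiply, sub_eq_add_neg, fromBlocks_add, fromBlocks_inj,
      transpose_neg, Matrix.neg_mul, Matrix.mul_neg, Matrix.mul_zero,
      Matrix.mul_one, Matrix.mul_assoc, neg_neg, add_zero, zero_add, neg_add_rev, and_true]
    abel
  rw [blk4_eq_submatrix_fromBlocks, negDef_submatrix_equiv, NegDef, NegDef, ← hschur,
    ← PosDef.fromBlocks_inv₂₂_posDef_iff X G hP, hPinv]
  simp [X, G, fromBlocks_neg, fromBlocks_transpose]

/-- The 2×2 block LMI is equivalent to the expanded 4×4 block LMI. -/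
theorem lmi_2x2_iff_4x4
    (n m p : ℕ) (Φ : Matrix (Fin n) (Fin n) ℝ) (hΦs : Φ.IsSymm) (hΦ : Φ.PosDef) (η : ℝ)
    (A : Matrix (Fin n) (Fin n) ℝ) (B : Matrix (Fin n) (Fin m) ℝ)
    (C : Matrix (Fin p) (Fin n) ℝ) (D : Matrix (Fin p) (Fin m) ℝ) :
    (fromBlocks (Aᵀ * Φ * A - Φ + Cᵀ * C) (Aᵀ * Φ * B + Cᵀ * D)
        (Bᵀ * Φ * A + Dᵀ * C) (Bᵀ * Φ * B + Dᵀ * D - η • 1)).NegDef ↔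
      (blk4 (-Φ) 0 Aᵀ Cᵀ
            0 ((-η) • 1 : Matrix (Fin m) (Fin m) ℝ) Bᵀ Dᵀ
            A B (-Φ⁻¹) 0
            C D 0 (-1)).NegDef :=
  lmi_2x2_iff_4x4_general n m p Φ hΦ η A B C D
end

section
/- Let A be a real n×n matrix, B_w a real n×m matrix, B_u a real n×q matrix, C_z a real p×n matrix, D_zw a real p×m matrix, D_zu a real p×q matrix, η a real number, Ψ a real symmetric positive definite m×m matrix, Π a real symmetric positive definite n×n matrix, and Λ a real q×n matrix. Suppose that the symmetric block matrix with block rows [−Π, 0, (AΠ + B_uΛ)ᵀ, (C_zΠ + D_zuΛ)ᵀ], [0, −η·I_m, B_wᵀ, D_zwᵀ], [AΠ + B_uΛ, B_w, −Π, 0], [C_zΠ + D_zuΛ, D_zw, 0, −I_p] is negative definite. Then every complex eigenvalue λ of A + B_uΛΠ⁻¹ satisfies |λ| < 1 (the state-feedback gain K = ΛΠ⁻¹ internally stabilizes the closed-loop system). -/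
open Matrix

/-!
Restricting the LMI to its first and third block rows and columns leaves
`[[Π, -Mᵀ], [-M, Π]] ≻ 0` with `M = AΠ + B_uΛ = KΠ` for the closed-loop matrix
`K = A + B_uΛΠ⁻¹`. Its Schur complement is the Stein inequality `Π - KΠKᵀ ≻ 0`. If `w` is a
left eigenvector of `K` for `μ`, evaluating the complexified inequality at `w*` gives
`(1 - |μ|²) wΠw* > 0`, and `wΠw* > 0`, so `|μ| < 1`.
-/

open scoped ComplexOrder

namespace Matrix

section Stein

variable {𝕜 : Type*} [RCLike 𝕜] {n : Type*} [Fintype n] [DecidableEq n]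

theorem exists_vecMul_eq_smul_of_mem_spectrum {A : Matrix n n 𝕜} {μ : 𝕜}
    (hμ : μ ∈ spectrum 𝕜 A) : ∃ w ≠ 0, w ᵥ* A = μ • w := by
  rw [spectrum.mem_iff, Algebra.algebraMap_eq_smul_one, isUnit_iff_isUnit_det,
    isUnit_iff_ne_zero, not_not, ← exists_vecMul_eq_zero_iff] at hμ
  obtain ⟨w, hw0, hw⟩ := hμ
  refine ⟨w, hw0, ?_⟩
  rwa [vecMul_sub, vecMul_smul, vecMul_one, sub_eq_zero, eq_comm] at hw

theorem norm_lt_one_of_mem_spectrum_of_posDef_sub_mul_mul_conjTranspose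
    {A P : Matrix n n 𝕜} (hP : P.PosDef) (hS : (P - A * P * Aᴴ).PosDef) {μ : 𝕜}
    (hμ : μ ∈ spectrum 𝕜 A) : ‖μ‖ < 1 := by
  obtain ⟨w, hw0, hw⟩ := exists_vecMul_eq_smul_of_mem_spectrum hμ
  have hw' : star w ≠ 0 := by simpa using hw0
  set t := w ⬝ᵥ P *ᵥ star w
  have hquad : w ⬝ᵥ (P - A * P * Aᴴ) *ᵥ star w = ((1 - ‖μ‖ ^ 2 : ℝ) : 𝕜) * t := by
    rw [sub_mulVec, dotProduct_sub, ← mulVec_mulVec, ← mulVec_mulVec, ← star_vecMul,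
      dotProduct_mulVec w A, hw, star_smul, mulVec_smul, smul_dotProduct, dotProduct_smul,
      smul_eq_mul, smul_eq_mul, RCLike.star_def, ← mul_assoc, RCLike.mul_conj]
    push_cast
    ring
  have hSpos : 0 < (1 - ‖μ‖ ^ 2) * RCLike.re t := by
    simpa [hquad, RCLike.re_ofReal_mul] using hS.re_dotProduct_pos hw'
  have htpos : 0 < RCLike.re t := by simpa using hP.re_dotProduct_pos hw'
  exact (sq_lt_one_iff₀ (norm_nonneg μ)).mp (sub_pos.mp (pos_of_mul_pos_left hSpos htpos.le))

end Stein

section Complexify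

variable {𝕜 : Type*} [RCLike 𝕜] {n : Type*} [Fintype n]

theorem re_star_dotProduct_map_algebraMap_mulVec (Q : Matrix n n ℝ) (v : n → 𝕜) :
    RCLike.re (star v ⬝ᵥ Q.map (algebraMap ℝ 𝕜) *ᵥ v)
      = (RCLike.re ∘ v) ⬝ᵥ Q *ᵥ (RCLike.re ∘ v)
        + (RCLike.im ∘ v) ⬝ᵥ Q *ᵥ (RCLike.im ∘ v) := by
  simp only [dotProduct, mulVec, Finset.mul_sum, map_sum, ← Finset.sum_add_distrib]
  refine Finset.sum_congr rfl fun i _ => Finset.sum_congr rfl fun j _ => ?_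
  simp [RCLike.mul_re, RCLike.mul_im]

omit [Fintype n] in
theorem conjTranspose_map_algebraMap {m : Type*} (Q : Matrix m n ℝ) :
    (Q.map (algebraMap ℝ 𝕜))ᴴ = Qᵀ.map (algebraMap ℝ 𝕜) := by
  rw [← conjTranspose_map _ fun r => (RCLike.conj_ofReal r).symm,
    conjTranspose_eq_transpose_of_trivial]

theorem PosDef.map_algebraMap {Q : Matrix n n ℝ} (hQ : Q.PosDef) :
    (Q.map (algebraMap ℝ 𝕜)).PosDef := by
  have hH : (Q.map (algebraMap ℝ 𝕜)).IsHermitian :=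
    hQ.isHermitian.map _ fun r => (RCLike.conj_ofReal r).symm
  refine .of_dotProduct_mulVec_pos hH fun v hv =>
    RCLike.pos_iff.mpr ⟨?_, hH.im_star_dotProduct_mulVec_self v⟩
  have hpos {x : n → ℝ} (hx : x ≠ 0) : 0 < x ⬝ᵥ Q *ᵥ x := hQ.dotProduct_mulVec_pos hx
  have hnonneg (x : n → ℝ) : 0 ≤ x ⬝ᵥ Q *ᵥ x := hQ.posSemidef.dotProduct_mulVec_nonneg x
  rw [re_star_dotProduct_map_algebraMap_mulVec]
  have : RCLike.re ∘ v ≠ 0 ∨ RCLike.im ∘ v ≠ 0 := by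
    by_contra! h
    exact hv <| funext fun i =>
      RCLike.ext (by simpa using congrFun h.1 i) (by simpa using congrFun h.2 i)
  rcases this with h | h
  · linarith [hpos h, hnonneg (RCLike.im ∘ v)]
  · linarith [hpos h, hnonneg (RCLike.re ∘ v)]

theorem norm_lt_one_of_mem_spectrum_map_of_posDef_sub_mul_mul_transpose [DecidableEq n]
    {A P : Matrix n n ℝ} (hP : P.PosDef) (hS : (P - A * P * Aᵀ).PosDef) {μ : 𝕜}
    (hμ : μ ∈ spectrum 𝕜 (A.map (algebraMap ℝ 𝕜))) : ‖μ‖ < 1 := by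
  refine norm_lt_one_of_mem_spectrum_of_posDef_sub_mul_mul_conjTranspose
    hP.map_algebraMap ?_ hμ
  rw [conjTranspose_map_algebraMap]
  simpa [Matrix.map_mul, Matrix.map_sub] using hS.map_algebraMap (𝕜 := 𝕜)

end Complexify

theorem PosDef.schur_complement_of_fromBlocks₁₁ {R : Type*} [CommRing R] [PartialOrder R]
    [StarRing R] {m n : Type*} [Fintype m] [Fintype n] [DecidableEq m]
    {A : Matrix m m R} (B : Matrix m n R) (D : Matrix n n R) [Invertible A]
    (hA : A.IsHermitian) (h : (fromBlocks A B Bᴴ D).PosDef) : (D - Bᴴ * A⁻¹ * B).PosDef := by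
  refine .of_dotProduct_mulVec_pos ?_ fun x hx => ?_
  · exact (IsHermitian.fromBlocks₁₁ B D hA).mp h.isHermitian
  · have hv : Sum.elim (-((A⁻¹ * B) *ᵥ x)) x ≠ 0 := fun hc =>
      hx (funext fun i => congrFun hc (Sum.inr i))
    have := h.dotProduct_mulVec_pos hv
    rw [dotProduct_mulVec, schur_complement_eq₁₁ B D _ _ hA, neg_add_cancel] at this
    simpa [dotProduct_mulVec] using this

theorem NegDef.submatrix {m n : Type*} [Fintype m] [Fintype n] {M : Matrix n n ℝ}
    (hM : M.NegDef) {e : m → n} (he : Function.Injective e) : (M.submatrix e e).NegDef :=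
  PosDef.submatrix hM he

end Matrix

theorem blk4_submatrix_one_three {R i1 i2 i3 i4 j1 j2 j3 j4 : Type*}
    (A11 : Matrix i1 j1 R) (A12 : Matrix i1 j2 R) (A13 : Matrix i1 j3 R) (A14 : Matrix i1 j4 R)
    (A21 : Matrix i2 j1 R) (A22 : Matrix i2 j2 R) (A23 : Matrix i2 j3 R) (A24 : Matrix i2 j4 R)
    (A31 : Matrix i3 j1 R) (A32 : Matrix i3 j2 R) (A33 : Matrix i3 j3 R) (A34 : Matrix i3 j4 R)
    (A41 : Matrix i4 j1 R) (A42 : Matrix i4 j2 R) (A43 : Matrix i4 j3 R) (A44 : Matrix i4 j4 R) :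
    (blk4 A11 A12 A13 A14 A21 A22 A23 A24 A31 A32 A33 A34 A41 A42 A43 A44).submatrix
        (Sum.map id (Sum.inr ∘ Sum.inl)) (Sum.map id (Sum.inr ∘ Sum.inl)) =
      fromBlocks A11 A13 A31 A33 := by
  ext (i | i) (j | j) <;> rfl

theorem state_feedback_synthesis_stabilizes_general
    (n m p q : ℕ) (A : Matrix (Fin n) (Fin n) ℝ) (Bw : Matrix (Fin n) (Fin m) ℝ)
    (Bu : Matrix (Fin n) (Fin q) ℝ) (Cz : Matrix (Fin p) (Fin n) ℝ)
    (Dzw : Matrix (Fin p) (Fin m) ℝ) (Dzu : Matrix (Fin p) (Fin q) ℝ) (η : ℝ)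
    (Pi : Matrix (Fin n) (Fin n) ℝ) (hPi : Pi.PosDef)
    (Λ : Matrix (Fin q) (Fin n) ℝ)
    (h : (blk4 (-Pi) 0 (A * Pi + Bu * Λ)ᵀ (Cz * Pi + Dzu * Λ)ᵀ
               0 ((-η) • 1 : Matrix (Fin m) (Fin m) ℝ) Bwᵀ Dzwᵀ
               (A * Pi + Bu * Λ) Bw (-Pi) 0
               (Cz * Pi + Dzu * Λ) Dzw 0 (-1)).NegDef) :
    ∀ μ ∈ spectrum ℂ ((A + Bu * (Λ * Pi⁻¹)).map (algebraMap ℝ ℂ)), ‖μ‖ < 1 := by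
  intro μ hμ
  set M := A * Pi + Bu * Λ
  set K := A + Bu * (Λ * Pi⁻¹)
  have : Invertible Pi := hPi.isUnit.invertible
  have hPiT : Piᵀ = Pi := by
    simpa [conjTranspose_eq_transpose_of_trivial] using hPi.isHermitian.eq
  have hM : M = K * Pi := by
    simp only [M, K, Matrix.add_mul, Matrix.mul_assoc, inv_mul_of_invertible, Matrix.mul_one]
  have h13 : (fromBlocks Pi (-Mᵀ) (-Mᵀ)ᴴ Pi).PosDef := by
    have := h.submatrix <|
      Sum.map_injective.mpr ⟨Function.injective_id, Sum.inr_injective.comp Sum.inl_injective⟩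
    rw [blk4_submatrix_one_three, NegDef, fromBlocks_neg, neg_neg] at this
    simpa [conjTranspose_eq_transpose_of_trivial] using this
  have hSchur : (-Mᵀ)ᴴ * Pi⁻¹ * (-Mᵀ) = K * Pi * Kᵀ := by
    simp [conjTranspose_eq_transpose_of_trivial, hM, transpose_mul, hPiT, Matrix.mul_assoc]
  have hStein : (Pi - K * Pi * Kᵀ).PosDef :=
    hSchur ▸ h13.schur_complement_of_fromBlocks₁₁ _ _ hPi.isHermitian
  exact norm_lt_one_of_mem_spectrum_map_of_posDef_sub_mul_mul_transpose hPi hStein hμ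

/-- Feasibility of the state-feedback synthesis LMI implies that the state-feedback gain
`K = ΛΠ⁻¹` internally stabilizes the closed-loop system: all complex eigenvalues of
`A + B_u Λ Π⁻¹` lie in the open unit disc. Here `Pi` plays the role of `Π`. -/
theorem state_feedback_synthesis_stabilizes
    (n m p q : ℕ) (A : Matrix (Fin n) (Fin n) ℝ) (Bw : Matrix (Fin n) (Fin m) ℝ)
    (Bu : Matrix (Fin n) (Fin q) ℝ) (Cz : Matrix (Fin p) (Fin n) ℝ)
    (Dzw : Matrix (Fin p) (Fin m) ℝ) (Dzu : Matrix (Fin p) (Fin q) ℝ) (η : ℝ)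
    (Ψ : Matrix (Fin m) (Fin m) ℝ) (hΨs : Ψ.IsSymm) (hΨ : Ψ.PosDef)
    (Pi : Matrix (Fin n) (Fin n) ℝ) (hPis : Pi.IsSymm) (hPi : Pi.PosDef)
    (Λ : Matrix (Fin q) (Fin n) ℝ)
    (h : (blk4 (-Pi) 0 (A * Pi + Bu * Λ)ᵀ (Cz * Pi + Dzu * Λ)ᵀ
               0 ((-η) • 1 : Matrix (Fin m) (Fin m) ℝ) Bwᵀ Dzwᵀ
               (A * Pi + Bu * Λ) Bw (-Pi) 0
               (Cz * Pi + Dzu * Λ) Dzw 0 (-1)).NegDef) :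
    ∀ μ ∈ spectrum ℂ ((A + Bu * (Λ * Pi⁻¹)).map (algebraMap ℝ ℂ)), ‖μ‖ < 1 :=
  state_feedback_synthesis_stabilizes_general n m p q A Bw Bu Cz Dzw Dzu η Pi hPi Λ h
end
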